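/- The zero-curvature condition ∂_y Û^λ − ∂_x V̂^λ + V̂^λ·Û^λ − Û^λ·V̂^λ = 0 holds on ℝ² for every λ ∈ ℝ with λ ≠ 0 if and only if the following equations hold identically: Q_x = k_y + k (b_y/b), P_y = ℓ_x + ℓ (c_x/c), b Q_y + 2 b_y Q = 0, and c P_x + 2 c_x P = 0 (the last two being the projective minimality equations). In particular, a surface is projective minimal if and only if d + α̂^λ is a family of flat connections. -/

import Mathlib

open Matrix

noncomputable section

/-- Partial derivative in the `x`-direction of a scalar function on `ℝ²`. -/
def pdx (f : ℝ × ℝ → ℝ) (z : ℝ × ℝ) : ℝ := deriv (fun t => f (t, z.2)) z.1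

/-- Partial derivative in the `y`-direction of a scalar function on `ℝ²`. -/
def pdy (f : ℝ × ℝ → ℝ) (z : ℝ × ℝ) : ℝ := deriv (fun t => f (z.1, t)) z.2

/-- `k = (bc − ∂_y(b_x/b))/2`. -/
def kF (b c : ℝ × ℝ → ℝ) (z : ℝ × ℝ) : ℝ :=
  (b z * c z - pdy (fun w => pdx b w / b w) z) / 2

/-- `ℓ = (bc − ∂_y(c_x/c))/2`. -/
def lF (b c : ℝ × ℝ → ℝ) (z : ℝ × ℝ) : ℝ :=
  (b z * c z - pdy (fun w => pdx c w / c w) z) / 2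

/-- `P = p + b_y/2 − c_{xx}/(2c) + c_x²/(4c²)`. -/
def PF (b c p : ℝ × ℝ → ℝ) (z : ℝ × ℝ) : ℝ :=
  p z + pdy b z / 2 - pdx (fun w => pdx c w) z / (2 * c z) + (pdx c z) ^ 2 / (4 * (c z) ^ 2)

/-- `Q = q + c_x/2 − b_{yy}/(2b) + b_y²/(4b²)`. -/
def QF (b c q : ℝ × ℝ → ℝ) (z : ℝ × ℝ) : ℝ :=
  q z + pdx c z / 2 - pdy (fun w => pdy b w) z / (2 * b z) + (pdy b z) ^ 2 / (4 * (b z) ^ 2)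

/-- The Wilczynski coefficient matrix `U`. -/
def Umat (b c p q : ℝ × ℝ → ℝ) (z : ℝ × ℝ) : Matrix (Fin 4) (Fin 4) ℝ :=
  !![pdx c z / (2 * c z), PF b c p z, kF b c z, b z * QF b c q z;
     1, -(pdx c z / (2 * c z)), 0, kF b c z;
     0, b z, pdx c z / (2 * c z), PF b c p z;
     0, 0, 1, -(pdx c z / (2 * c z))]

/-- The Wilczynski coefficient matrix `V`. -/
def Vmat (b c p q : ℝ × ℝ → ℝ) (z : ℝ × ℝ) : Matrix (Fin 4) (Fin 4) ℝ :=
  !![pdy b z / (2 * b z), lF b c z, QF b c q z, c z * PF b c p z;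
     0, pdy b z / (2 * b z), c z, QF b c q z;
     1, 0, -(pdy b z / (2 * b z)), lF b c z;
     0, 1, 0, -(pdy b z / (2 * b z))]

/-- Entrywise partial `x`-derivative of a matrix-valued function on `ℝ²`. -/
def pdxM (F : ℝ × ℝ → Matrix (Fin 4) (Fin 4) ℝ) (z : ℝ × ℝ) : Matrix (Fin 4) (Fin 4) ℝ :=
  Matrix.of fun i j => pdx (fun w => F w i j) z

/-- Entrywise partial `y`-derivative of a matrix-valued function on `ℝ²`. -/
def pdyM (F : ℝ × ℝ → Matrix (Fin 4) (Fin 4) ℝ) (z : ℝ × ℝ) : Matrix (Fin 4) (Fin 4) ℝ :=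
  Matrix.of fun i j => pdy (fun w => F w i j) z

/-- The loop-parameter family `Û^λ` associated to the conformal Gauss map. -/
def UhatLam (b c p q : ℝ × ℝ → ℝ) (lam : ℝ) (z : ℝ × ℝ) : Matrix (Fin 4) (Fin 4) ℝ :=
  !![pdx c z / (2 * c z), PF b c p z, kF b c z, lam⁻¹ * (b z * QF b c q z);
     1, -(pdx c z / (2 * c z)), 0, kF b c z;
     0, lam⁻¹ * b z, pdx c z / (2 * c z), PF b c p z;
     0, 0, 1, -(pdx c z / (2 * c z))]

/-- The loop-parameter family `V̂^λ` associated to the conformal Gauss map. -/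
def VhatLam (b c p q : ℝ × ℝ → ℝ) (lam : ℝ) (z : ℝ × ℝ) : Matrix (Fin 4) (Fin 4) ℝ :=
  !![pdy b z / (2 * b z), lF b c z, QF b c q z, lam * (c z * PF b c p z);
     0, pdy b z / (2 * b z), lam * c z, QF b c q z;
     1, 0, -(pdy b z / (2 * b z)), lF b c z;
     0, 1, 0, -(pdy b z / (2 * b z))]


section Infra

variable {f g : ℝ × ℝ → ℝ} {z : ℝ × ℝ} {a : ℝ}

lemma dA (hf : ContDiff ℝ (⊤:ℕ∞) f) (z : ℝ × ℝ) : DifferentiableAt ℝ f z :=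
  (hf.differentiable (by simp)) z

lemma hasDerivAt_sliceX (hf : DifferentiableAt ℝ f z) :
    HasDerivAt (fun t => f (t, z.2)) (pdx f z) z.1 := by
  have h1 : HasDerivAt (fun t : ℝ => (t, z.2)) ((1:ℝ), (0:ℝ)) z.1 :=
    HasDerivAt.prodMk (hasDerivAt_id z.1) (hasDerivAt_const z.1 z.2)
  have h2 : DifferentiableAt ℝ (fun t => f (t, z.2)) z.1 := by
    have := hf.comp z.1 h1.differentiableAt
    exact this
  exact h2.hasDerivAt

lemma hasDerivAt_sliceY (hf : DifferentiableAt ℝ f z) :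
    HasDerivAt (fun t => f (z.1, t)) (pdy f z) z.2 := by
  have h1 : HasDerivAt (fun t : ℝ => (z.1, t)) ((0:ℝ), (1:ℝ)) z.2 :=
    HasDerivAt.prodMk (hasDerivAt_const z.2 z.1) (hasDerivAt_id z.2)
  have h2 : DifferentiableAt ℝ (fun t => f (z.1, t)) z.2 := by
    have := hf.comp z.2 h1.differentiableAt
    exact this
  exact h2.hasDerivAt

lemma pdx_eq_fderiv (hf : DifferentiableAt ℝ f z) : pdx f z = fderiv ℝ f z (1, 0) := by
  have h1 : HasDerivAt (fun t : ℝ => (t, z.2)) ((1:ℝ), (0:ℝ)) z.1 :=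
    HasDerivAt.prodMk (hasDerivAt_id z.1) (hasDerivAt_const z.1 z.2)
  exact (hf.hasFDerivAt.comp_hasDerivAt z.1 (by simpa using h1)).deriv

lemma pdy_eq_fderiv (hf : DifferentiableAt ℝ f z) : pdy f z = fderiv ℝ f z (0, 1) := by
  have h1 : HasDerivAt (fun t : ℝ => (z.1, t)) ((0:ℝ), (1:ℝ)) z.2 :=
    HasDerivAt.prodMk (hasDerivAt_const z.2 z.1) (hasDerivAt_id z.2)
  exact (hf.hasFDerivAt.comp_hasDerivAt z.2 (by simpa using h1)).deriv

lemma contDiff_pdx (hf : ContDiff ℝ (⊤:ℕ∞) f) : ContDiff ℝ (⊤:ℕ∞) (pdx f) := by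
  have h : pdx f = fun z => fderiv ℝ f z (1, 0) :=
    funext fun z => pdx_eq_fderiv (dA hf z)
  rw [h]
  exact (hf.fderiv_right (m := (⊤:ℕ∞)) (by exact_mod_cast (by simp : (⊤:ℕ∞)+1 ≤ ⊤))).clm_apply
    contDiff_const

lemma contDiff_pdy (hf : ContDiff ℝ (⊤:ℕ∞) f) : ContDiff ℝ (⊤:ℕ∞) (pdy f) := by
  have h : pdy f = fun z => fderiv ℝ f z (0, 1) :=
    funext fun z => pdy_eq_fderiv (dA hf z)
  rw [h]
  exact (hf.fderiv_right (m := (⊤:ℕ∞)) (by exact_mod_cast (by simp : (⊤:ℕ∞)+1 ≤ ⊤))).clm_apply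
    contDiff_const

lemma pdx_pdy (hf : ContDiff ℝ (⊤:ℕ∞) f) : pdx (pdy f) = pdy (pdx f) := by
  funext z
  have hx : pdx f = fun w => fderiv ℝ f w (1, 0) := funext fun w => pdx_eq_fderiv (dA hf w)
  have hy : pdy f = fun w => fderiv ℝ f w (0, 1) := funext fun w => pdy_eq_fderiv (dA hf w)
  have hfd : DifferentiableAt ℝ (fderiv ℝ f) z :=
    ((hf.fderiv_right (m := (⊤:ℕ∞)) (by exact_mod_cast (by simp : (⊤:ℕ∞)+1 ≤ ⊤))).differentiable
      (by simp)) z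
  have hsymm : IsSymmSndFDerivAt ℝ f z := hf.contDiffAt.isSymmSndFDerivAt
    (by rw [show ((2:WithTop ℕ∞)) = ((2:ℕ∞):WithTop ℕ∞) by norm_cast]
        rw [minSmoothness_of_isRCLikeNormedField]; exact_mod_cast (by simp : (2:ℕ∞) ≤ ⊤))
  rw [hy, hx, pdx_eq_fderiv, pdy_eq_fderiv, fderiv_clm_apply hfd (differentiableAt_const _),
    fderiv_clm_apply hfd (differentiableAt_const _)]
  · simp [hsymm (1,0) (0,1)]
  · exact hfd.clm_apply (differentiableAt_const _)
  · exact hfd.clm_apply (differentiableAt_const _)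

lemma pdx_constF : pdx (fun _ => a) z = 0 := by simp [pdx]

lemma pdy_constF : pdy (fun _ => a) z = 0 := by simp [pdy]

end Infra

section Curv

variable {b c p q : ℝ × ℝ → ℝ}

lemma contDiff_PF (hb : ContDiff ℝ (⊤:ℕ∞) b) (hc : ContDiff ℝ (⊤:ℕ∞) c)
    (hp : ContDiff ℝ (⊤:ℕ∞) p) (hc0 : ∀ z, c z ≠ 0) : ContDiff ℝ (⊤:ℕ∞) (PF b c p) := by
  unfold PF
  exact ((hp.add ((contDiff_pdy hb).div_const 2)).sub
      ((contDiff_pdx (contDiff_pdx hc)).div (contDiff_const.mul hc)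
        (fun z => mul_ne_zero two_ne_zero (hc0 z)))).add
    (((contDiff_pdx hc).pow 2).div (contDiff_const.mul (hc.pow 2))
      (fun z => mul_ne_zero (by norm_num) (pow_ne_zero 2 (hc0 z))))

lemma contDiff_QF (hb : ContDiff ℝ (⊤:ℕ∞) b) (hc : ContDiff ℝ (⊤:ℕ∞) c)
    (hq : ContDiff ℝ (⊤:ℕ∞) q) (hb0 : ∀ z, b z ≠ 0) : ContDiff ℝ (⊤:ℕ∞) (QF b c q) := by
  unfold QF
  exact ((hq.add ((contDiff_pdx hc).div_const 2)).sub
      ((contDiff_pdy (contDiff_pdy hb)).div (contDiff_const.mul hb)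
        (fun z => mul_ne_zero two_ne_zero (hb0 z)))).add
    (((contDiff_pdy hb).pow 2).div (contDiff_const.mul (hb.pow 2))
      (fun z => mul_ne_zero (by norm_num) (pow_ne_zero 2 (hb0 z))))

lemma kF_eq (hb : ContDiff ℝ (⊤:ℕ∞) b) (hb0 : ∀ z, b z ≠ 0) (w : ℝ × ℝ) :
    kF b c w = (b w * c w - (pdy (pdx b) w * b w - pdx b w * pdy b w) / (b w)^2) / 2 := by
  unfold kF
  congr 2
  exact ((hasDerivAt_sliceY (dA (contDiff_pdx hb) w)).div
    (hasDerivAt_sliceY (dA hb w)) (hb0 w)).deriv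

lemma lF_eq (hc : ContDiff ℝ (⊤:ℕ∞) c) (hc0 : ∀ z, c z ≠ 0) (w : ℝ × ℝ) :
    lF b c w = (b w * c w - (pdy (pdx c) w * c w - pdx c w * pdy c w) / (c w)^2) / 2 := by
  unfold lF
  congr 2
  exact ((hasDerivAt_sliceY (dA (contDiff_pdx hc) w)).div
    (hasDerivAt_sliceY (dA hc w)) (hc0 w)).deriv

set_option maxHeartbeats 3000000 in
lemma curv_eq (b c p q : ℝ × ℝ → ℝ)
    (hb : ContDiff ℝ (⊤:ℕ∞) b) (hc : ContDiff ℝ (⊤:ℕ∞) c)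
    (hp : ContDiff ℝ (⊤:ℕ∞) p) (hq : ContDiff ℝ (⊤:ℕ∞) q)
    (hb0 : ∀ z, b z ≠ 0) (hc0 : ∀ z, c z ≠ 0) (lam : ℝ) (hlam : lam ≠ 0) (z : ℝ × ℝ) :
    pdyM (UhatLam b c p q lam) z - pdxM (VhatLam b c p q lam) z
      + VhatLam b c p q lam z * UhatLam b c p q lam z
      - UhatLam b c p q lam z * VhatLam b c p q lam z =
    !![0,
       pdy (PF b c p) z - (pdx (lF b c) z + lF b c z * (pdx c z / c z)),
       -(pdx (QF b c q) z - (pdy (kF b c) z + kF b c z * (pdy b z / b z))),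
       lam⁻¹ * (b z * pdy (QF b c q) z + 2 * pdy b z * QF b c q z)
         - lam * (c z * pdx (PF b c p) z + 2 * pdx c z * PF b c p z);
       0, 0, 0, -(pdx (QF b c q) z - (pdy (kF b c) z + kF b c z * (pdy b z / b z)));
       0, 0, 0, pdy (PF b c p) z - (pdx (lF b c) z + lF b c z * (pdx c z / c z));
       0, 0, 0, 0] := by
  have hPF := contDiff_PF hb hc hp hc0
  have hQF := contDiff_QF hb hc hq hb0
  -- derivatives of U entries in the y-direction
  have hU00 : pdy (fun w => pdx c w / (2 * c w)) z
      = (pdy (pdx c) z * (2 * c z) - pdx c z * (2 * pdy c z)) / (2 * c z)^2 :=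
    ((hasDerivAt_sliceY (dA (contDiff_pdx hc) z)).div
      ((hasDerivAt_sliceY (dA hc z)).const_mul 2)
      (mul_ne_zero two_ne_zero (hc0 z))).deriv
  have hU03 : pdy (fun w => lam⁻¹ * (b w * QF b c q w)) z
      = lam⁻¹ * (pdy b z * QF b c q z + b z * pdy (QF b c q) z) :=
    (((hasDerivAt_sliceY (dA hb z)).mul
      (hasDerivAt_sliceY (dA hQF z))).const_mul lam⁻¹).deriv
  have hU21 : pdy (fun w => lam⁻¹ * b w) z = lam⁻¹ * pdy b z :=
    ((hasDerivAt_sliceY (dA hb z)).const_mul lam⁻¹).deriv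
  -- derivatives of V entries in the x-direction
  have hV00 : pdx (fun w => pdy b w / (2 * b w)) z
      = (pdy (pdx b) z * (2 * b z) - pdy b z * (2 * pdx b z)) / (2 * b z)^2 := by
    have h := ((hasDerivAt_sliceX (dA (contDiff_pdy hb) z)).div
      ((hasDerivAt_sliceX (dA hb z)).const_mul 2)
      (mul_ne_zero two_ne_zero (hb0 z))).deriv
    rw [show pdx (pdy b) z = pdy (pdx b) z from congrFun (pdx_pdy hb) z] at h
    exact h
  have hV03 : pdx (fun w => lam * (c w * PF b c p w)) z
      = lam * (pdx c z * PF b c p z + c z * pdx (PF b c p) z) :=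
    (((hasDerivAt_sliceX (dA hc z)).mul
      (hasDerivAt_sliceX (dA hPF z))).const_mul lam).deriv
  have hV12 : pdx (fun w => lam * c w) z = lam * pdx c z :=
    ((hasDerivAt_sliceX (dA hc z)).const_mul lam).deriv
  have hU11 : pdy (fun w => -(pdx c w / (2 * c w))) z
      = -((pdy (pdx c) z * (2 * c z) - pdx c z * (2 * pdy c z)) / (2 * c z)^2) :=
    (((hasDerivAt_sliceY (dA (contDiff_pdx hc) z)).div
      ((hasDerivAt_sliceY (dA hc z)).const_mul 2)
      (mul_ne_zero two_ne_zero (hc0 z))).neg).deriv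
  have hV22 : pdx (fun w => -(pdy b w / (2 * b w))) z
      = -((pdy (pdx b) z * (2 * b z) - pdy b z * (2 * pdx b z)) / (2 * b z)^2) := by
    have h := (((hasDerivAt_sliceX (dA (contDiff_pdy hb) z)).div
      ((hasDerivAt_sliceX (dA hb z)).const_mul 2)
      (mul_ne_zero two_ne_zero (hb0 z))).neg).deriv
    rw [show pdx (pdy b) z = pdy (pdx b) z from congrFun (pdx_pdy hb) z] at h
    exact h
  have hbz := hb0 z
  have hcz := hc0 z
  have hk := kF_eq (c := c) hb hb0
  have hl := lF_eq (b := b) hc hc0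
  ext i j
  fin_cases i <;> fin_cases j <;>
    simp only [pdyM, pdxM, UhatLam, VhatLam, Matrix.sub_apply, Matrix.add_apply,
      Matrix.mul_apply, Fin.sum_univ_four, Matrix.of_apply, Matrix.cons_val', Matrix.cons_val_zero,
      Matrix.cons_val_one, Matrix.head_cons, Matrix.empty_val', Matrix.cons_val_fin_one,
      Matrix.head_fin_const, Matrix.cons_val_two, Matrix.tail_cons, Matrix.cons_val_three,
      Fin.mk_zero, Fin.mk_one, Fin.isValue, show (⟨2,by norm_num⟩ : Fin 4) = 2 from rfl,
      show (⟨3,by norm_num⟩ : Fin 4) = 3 from rfl] <;>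
  simp only [hU00, hU03, hU21, hU11, hV00, hV03, hV12, hV22, hk z, hl z, pdy_constF, pdx_constF] <;>
  field_simp <;> ring

end Curv

/-- The zero-curvature condition for `Û^λ, V̂^λ` holds for every `λ ≠ 0` iff
`Q_x = k_y + k b_y/b`, `P_y = ℓ_x + ℓ c_x/c`, `b Q_y + 2 b_y Q = 0` and
`c P_x + 2 c_x P = 0` hold identically (the last two being the projective
minimality equations); i.e. a surface is projective minimal iff `d + α̂^λ` is a
family of flat connections. -/

theorem projective_minimal_iff_flat
    (b c p q : ℝ × ℝ → ℝ)
    (hb : ContDiff ℝ (⊤ : ℕ∞) b) (hc : ContDiff ℝ (⊤ : ℕ∞) c)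
    (hp : ContDiff ℝ (⊤ : ℕ∞) p) (hq : ContDiff ℝ (⊤ : ℕ∞) q)
    (hb0 : ∀ z, b z ≠ 0) (hc0 : ∀ z, c z ≠ 0) :
    (∀ lam : ℝ, lam ≠ 0 → ∀ z,
        pdyM (UhatLam b c p q lam) z - pdxM (VhatLam b c p q lam) z
          + VhatLam b c p q lam z * UhatLam b c p q lam z
          - UhatLam b c p q lam z * VhatLam b c p q lam z = 0)
    ↔ (∀ z,
        pdx (QF b c q) z = pdy (kF b c) z + kF b c z * (pdy b z / b z) ∧
        pdy (PF b c p) z = pdx (lF b c) z + lF b c z * (pdx c z / c z) ∧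
        b z * pdy (QF b c q) z + 2 * pdy b z * QF b c q z = 0 ∧
        c z * pdx (PF b c p) z + 2 * pdx c z * PF b c p z = 0) := by
  constructor
  · intro h z
    have H1 := h 1 one_ne_zero z
    rw [curv_eq b c p q hb hc hp hq hb0 hc0 1 one_ne_zero z] at H1
    have H2 := h 2 two_ne_zero z
    rw [curv_eq b c p q hb hc hp hq hb0 hc0 2 two_ne_zero z] at H2
    have e01 := congrFun (congrFun H1 0) 1
    have e02 := congrFun (congrFun H1 0) 2
    have e03 := congrFun (congrFun H1 0) 3
    have f03 := congrFun (congrFun H2 0) 3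
    simp only [Matrix.cons_val', Matrix.cons_val_zero, Matrix.cons_val_one, Matrix.head_cons,
      Matrix.empty_val', Matrix.cons_val_fin_one, Matrix.head_fin_const, Matrix.cons_val_two,
      Matrix.tail_cons, Matrix.cons_val_three, Matrix.zero_apply] at e01 e02 e03 f03
    simp at e01 e02 e03 f03
    refine ⟨by linarith, by linarith, by linarith, by linarith⟩
  · intro h lam hlam z
    rw [curv_eq b c p q hb hc hp hq hb0 hc0 lam hlam z]
    obtain ⟨h1, h2, h3, h4⟩ := h z
    have e1 : pdx (QF b c q) z - (pdy (kF b c) z + kF b c z * (pdy b z / b z)) = 0 :=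
      sub_eq_zero_of_eq h1
    have e2 : pdy (PF b c p) z - (pdx (lF b c) z + lF b c z * (pdx c z / c z)) = 0 :=
      sub_eq_zero_of_eq h2
    ext i j
    fin_cases i <;> fin_cases j <;>
      simp [e1, e2, h3, h4, Matrix.vecHead, Matrix.vecTail]
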